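/- KD mana is nonincreasing under partial trace: for a density matrix ρ on n qubits, M(Tr₁ρ) ≤ M(ρ), where Tr₁ is the partial trace over the first qubit, and the KD distribution of Tr₁ρ satisfies Q_{g,χ}(Tr₁ρ) = Σ_{g',χ'} Q_{(g',g),(χ',χ)}(ρ). -/

import Mathlib

open scoped BigOperators
open Matrix Kronecker
open scoped ComplexOrder

noncomputable section

/-- The group `G = (ℤ/2ℤ)^n` indexing the computational basis of `(ℂ²)^{⊗n}`. -/
abbrev G (n : ℕ) : Type := Fin n → ZMod 2

/-- Mod-2 dot product. -/
def dot {n : ℕ} (u v : G n) : ZMod 2 := ∑ j, u j * v j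

/-- `(-1)^x` for `x : ZMod 2`. -/
def sgn (x : ZMod 2) : ℂ := if x = 0 then 1 else -1

/-- Normalization constant `2^{-n/2}`. -/
def nrm (n : ℕ) : ℂ := ((Real.sqrt 2 ^ n : ℝ) : ℂ)⁻¹

/-- Amplitude `⟨a|χ⟩ = (-1)^{χ·a} 2^{-n/2}` of the Fourier basis state `|χ⟩`. -/
def chi {n : ℕ} (χ a : G n) : ℂ := sgn (dot χ a) * nrm n

/-- KD phase-space point operator `B_{g,χ} = |χ⟩⟨χ|g⟩⟨g|`. -/
def B {n : ℕ} (g χ : G n) : Matrix (G n) (G n) ℂ :=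
  Matrix.of fun a b => chi χ a * (starRingEnd ℂ) (chi χ g) * (if b = g then 1 else 0)

/-- Real Pauli string `P_{u,v} = ∏_j Z_j^{v_j} X_j^{u_j}`:
it maps `|b⟩` to `(-1)^{v·(b+u)} |b+u⟩`. -/
def P {n : ℕ} (u v : G n) : Matrix (G n) (G n) ℂ :=
  Matrix.of fun a b => if a = b + u then sgn (dot v a) else 0

/-- The `(ℤ/2ℤ)^n` Kirkwood–Dirac distribution `Q_{g,χ}(ρ) = Tr(B_{g,χ} ρ)`. -/
def Q {n : ℕ} (ρ : Matrix (G n) (G n) ℂ) (g χ : G n) : ℂ := (B g χ * ρ).trace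

/-- KD mana `M(rho) = log sum_{g,chi} |Q_{g,chi}(rho)|`. -/
def mana {n : ℕ} (ρ : Matrix (G n) (G n) ℂ) : ℝ :=
  Real.log (∑ g : G n, ∑ χ : G n, ‖Q ρ g χ‖)

/-- Partial trace over the first (single-qubit) tensor factor. -/
def ptr₁ {n : ℕ} (ρ : Matrix (G 1 × G n) (G 1 × G n) ℂ) : Matrix (G n) (G n) ℂ :=
  Matrix.of fun a b => ∑ x : G 1, ρ (x, a) (x, b)

/-!
The operators `B g χ` resolve the identity, so summing the product operators `B g' χ' ⊗ₖ B g χ`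
over the first qubit's indices gives `1 ⊗ₖ B g χ`, whose trace against `ρ` is the trace of
`B g χ` against `ptr₁ ρ`. The triangle inequality then bounds the ℓ¹-norm of the marginal by that
of the full distribution, and `Tr ρ = 1` keeps the smaller sum at least `1`, where `log` is
monotone.
-/

open Finset

lemma sgn_add (x y : ZMod 2) : sgn (x + y) = sgn x * sgn y := by
  have h : ∀ z : ZMod 2, z = 0 ∨ z = 1 := by decide
  rcases h x with rfl | rfl <;> rcases h y with rfl | rfl <;>
    simp [sgn, show (1 : ZMod 2) + 1 = 0 from rfl]

lemma sgn_sum {ι : Type*} (s : Finset ι) (f : ι → ZMod 2) :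
    sgn (∑ j ∈ s, f j) = ∏ j ∈ s, sgn (f j) := by
  induction s using Finset.cons_induction with
  | empty => rfl
  | cons a s ha ih => rw [sum_cons, prod_cons, sgn_add, ih]

lemma conj_sgn (x : ZMod 2) : (starRingEnd ℂ) (sgn x) = sgn x := by
  unfold sgn; split_ifs <;> simp

lemma dot_add_right {n : ℕ} (u a b : G n) : dot u (a + b) = dot u a + dot u b := by
  simp [dot, mul_add, sum_add_distrib]

lemma sum_sgn_dot {n : ℕ} (c : G n) :
    ∑ χ : G n, sgn (dot χ c) = if c = 0 then (2 : ℂ) ^ n else 0 := by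
  simp_rw [dot, sgn_sum]
  rw [← Fintype.prod_sum (fun j (y : ZMod 2) => sgn (y * c j))]
  split_ifs with hc
  · simp [hc, sgn]
  · obtain ⟨j, hj⟩ := Function.ne_iff.mp hc
    refine prod_eq_zero (mem_univ j) ?_
    have hcj : c j = 1 := by
      rw [Pi.zero_apply] at hj; generalize c j = x at hj ⊢; revert x; decide
    rw [hcj, show ∑ y : ZMod 2, sgn (y * 1) = sgn 0 + sgn 1 from Fin.sum_univ_two _]
    simp [sgn]

lemma nrm_mul_nrm (n : ℕ) : nrm n * nrm n = ((2 : ℂ) ^ n)⁻¹ := by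
  rw [nrm, ← mul_inv, ← Complex.ofReal_mul, ← mul_pow, Real.mul_self_sqrt zero_le_two]
  push_cast; rfl

lemma chi_mul_conj_chi {n : ℕ} (χ a b : G n) :
    chi χ a * (starRingEnd ℂ) (chi χ b) = ((2 : ℂ) ^ n)⁻¹ * sgn (dot χ (a + b)) := by
  have conj_nrm : (starRingEnd ℂ) (nrm n) = nrm n := by simp [nrm]
  rw [chi, chi, map_mul, conj_sgn, conj_nrm, dot_add_right, sgn_add, ← nrm_mul_nrm]
  ring

lemma sum_B_eq_one (n : ℕ) : ∑ g : G n, ∑ χ : G n, B g χ = (1 : Matrix (G n) (G n) ℂ) := by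
  ext a b
  have neg_b : -b = b := funext fun j => CharTwo.neg_eq (b j)
  simp only [Matrix.sum_apply, B, Matrix.of_apply, mul_ite, mul_one, mul_zero]
  rw [sum_comm]
  simp only [sum_ite_eq, mem_univ, if_true, chi_mul_conj_chi, ← mul_sum, sum_sgn_dot,
    add_eq_zero_iff_eq_neg, neg_b, Matrix.one_apply]
  split_ifs <;> simp

lemma sum_Q_eq_trace {n : ℕ} (ρ : Matrix (G n) (G n) ℂ) :
    ∑ g : G n, ∑ χ : G n, Q ρ g χ = ρ.trace := by
  simp only [Q, ← Matrix.trace_sum, ← Matrix.sum_mul, sum_B_eq_one, Matrix.one_mul]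

lemma norm_trace_le_sum_norm_Q {n : ℕ} (ρ : Matrix (G n) (G n) ℂ) :
    ‖ρ.trace‖ ≤ ∑ g : G n, ∑ χ : G n, ‖Q ρ g χ‖ := by
  rw [← sum_Q_eq_trace]
  exact (norm_sum_le _ _).trans (sum_le_sum fun g _ => norm_sum_le _ _)

section PartialTrace

variable {ι κ R : Type*} [Fintype ι] [Fintype κ]

def traceLeft [AddCommMonoid R] (ρ : Matrix (ι × κ) (ι × κ) R) : Matrix κ κ R :=
  Matrix.of fun a b => ∑ x, ρ (x, a) (x, b)

lemma trace_traceLeft [AddCommMonoid R] (ρ : Matrix (ι × κ) (ι × κ) R) :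
    (traceLeft ρ).trace = ρ.trace := by
  simp only [Matrix.trace, Matrix.diag, traceLeft, Matrix.of_apply, Fintype.sum_prod_type]
  exact sum_comm

lemma trace_one_kronecker_mul [Semiring R] [DecidableEq ι]
    (A : Matrix κ κ R) (ρ : Matrix (ι × κ) (ι × κ) R) :
    (((1 : Matrix ι ι R) ⊗ₖ A) * ρ).trace = (A * traceLeft ρ).trace := by
  simp only [Matrix.trace, Matrix.diag, Matrix.mul_apply, traceLeft, Matrix.of_apply,
    Matrix.kronecker_apply, Fintype.sum_prod_type, Matrix.one_apply, ite_mul, one_mul, zero_mul,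
    mul_sum, sum_ite_irrel, sum_const_zero, sum_ite_eq, mem_univ, if_true]
  rw [sum_comm]
  exact sum_congr rfl fun a _ => sum_comm

lemma sum_kronecker {l m n p ι' : Type*} [NonUnitalNonAssocSemiring R] (s : Finset ι')
    (A : ι' → Matrix l m R) (B : Matrix n p R) :
    ∑ i ∈ s, A i ⊗ₖ B = (∑ i ∈ s, A i) ⊗ₖ B := by
  ext ⟨i₁, i₂⟩ ⟨j₁, j₂⟩
  simp [Matrix.sum_apply, sum_mul]

end PartialTrace

lemma ptr₁_eq_traceLeft {n : ℕ} (ρ : Matrix (G 1 × G n) (G 1 × G n) ℂ) :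
    ptr₁ ρ = traceLeft ρ := rfl

lemma Q_ptr₁ {n : ℕ} (ρ : Matrix (G 1 × G n) (G 1 × G n) ℂ) (g χ : G n) :
    Q (ptr₁ ρ) g χ = ∑ g' : G 1, ∑ χ' : G 1, ((B g' χ' ⊗ₖ B g χ) * ρ).trace := by
  rw [Q, ptr₁_eq_traceLeft, ← trace_one_kronecker_mul, ← sum_B_eq_one]
  simp only [← sum_kronecker, Matrix.sum_mul, Matrix.trace_sum]

lemma sum_norm_Q_ptr₁_le {n : ℕ} (ρ : Matrix (G 1 × G n) (G 1 × G n) ℂ) :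
    ∑ g : G n, ∑ χ : G n, ‖Q (ptr₁ ρ) g χ‖ ≤
      ∑ g' : G 1, ∑ g : G n, ∑ χ' : G 1, ∑ χ : G n, ‖((B g' χ' ⊗ₖ B g χ) * ρ).trace‖ :=
  calc ∑ g : G n, ∑ χ : G n, ‖Q (ptr₁ ρ) g χ‖
      ≤ ∑ g : G n, ∑ χ : G n, ∑ g' : G 1, ∑ χ' : G 1, ‖((B g' χ' ⊗ₖ B g χ) * ρ).trace‖ := by
        gcongr with g _ χ _
        rw [Q_ptr₁]
        exact (norm_sum_le _ _).trans (sum_le_sum fun g' _ => norm_sum_le _ _)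
    _ = ∑ g : G n, ∑ g' : G 1, ∑ χ' : G 1, ∑ χ : G n, ‖((B g' χ' ⊗ₖ B g χ) * ρ).trace‖ :=
        sum_congr rfl fun g _ => by rw [sum_comm]; exact sum_congr rfl fun g' _ => sum_comm
    _ = _ := sum_comm

theorem mana_partial_trace_general {n : ℕ} (ρ : Matrix (G 1 × G n) (G 1 × G n) ℂ)
    (hτ : ρ.trace = 1) :
    (∀ g χ : G n, Q (ptr₁ ρ) g χ =
        ∑ g' : G 1, ∑ χ' : G 1, ((B g' χ' ⊗ₖ B g χ) * ρ).trace) ∧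
    mana (ptr₁ ρ) ≤
      Real.log (∑ g' : G 1, ∑ g : G n, ∑ χ' : G 1, ∑ χ : G n,
        ‖((B g' χ' ⊗ₖ B g χ) * ρ).trace‖) := by
  refine ⟨Q_ptr₁ ρ, Real.log_le_log ?_ (sum_norm_Q_ptr₁_le ρ)⟩
  calc (0 : ℝ) < ‖(ptr₁ ρ).trace‖ := by
        rw [ptr₁_eq_traceLeft, trace_traceLeft, hτ, norm_one]
        exact one_pos
    _ ≤ _ := norm_trace_le_sum_norm_Q _

/-- the KD distribution of the reduced state is the marginal of the KD
distribution over the first qubit's indices, and the KD mana is nonincreasing under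
the partial trace. -/
theorem mana_partial_trace {n : ℕ} (ρ : Matrix (G 1 × G n) (G 1 × G n) ℂ)
    (hρ : ρ.PosSemidef) (hτ : ρ.trace = 1) :
    (∀ g χ : G n, Q (ptr₁ ρ) g χ =
        ∑ g' : G 1, ∑ χ' : G 1, ((B g' χ' ⊗ₖ B g χ) * ρ).trace) ∧
    mana (ptr₁ ρ) ≤
      Real.log (∑ g' : G 1, ∑ g : G n, ∑ χ' : G 1, ∑ χ : G n,
        ‖((B g' χ' ⊗ₖ B g χ) * ρ).trace‖) :=
  mana_partial_trace_general ρ hτ
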